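/- For any finite graph G, |χ̃(Ind(G))| ≤ 2^{φ(G)}, where φ(G) is the decycling number of G, the minimum number of vertices whose deletion makes G a forest. -/

import Mathlib

/-! Write `f A` for the alternating count `∑ (-1)^|s|` of the independent subsets `s ⊆ A`, so that
`χ̃(Ind G) = -f V`. Splitting by whether `v ∈ s` gives `f A = f (A - v) - f (A - N[v])`.
On a forest `|f A| ≤ 1`: if `u` is a leaf with neighbour `w`, then `u` is isolated in `A - w`,
so `f (A - w) = 0` and `f A = -f (A - N[w])`. Splitting at each vertex of a decycling set `D`
leaves at most `2^|D|` terms, each an `f` of a forest. -/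

open Finset

attribute [local instance] Classical.propDecidable

/-- `s` is an independent set of the graph `G`. -/
def SimpleGraph.IsIndep {V : Type*} (G : SimpleGraph V) (s : Finset V) : Prop :=
  ∀ u ∈ s, ∀ v ∈ s, ¬ G.Adj u v

namespace SimpleGraph

theorem IsAcyclic.exists_subsingleton_neighborSet {V : Type*} [Finite V] [Nonempty V]
    {G : SimpleGraph V} (h : G.IsAcyclic) : ∃ u, (G.neighborSet u).Subsingleton := by
  -- the start of a longest path: a neighbour off the path would extend it
  obtain ⟨u, v, p, hp, hmax⟩ := Walk.exists_isPath_forall_isPath_length_le_length G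
  refine ⟨u, Set.subsingleton_of_forall_eq p.snd fun w hadj => ?_⟩
  refine h.eq_snd_of_adj_start hp hadj ?_
  by_contra hw
  simpa using hmax _ _ _ (hp.cons (h := G.adj_symm hadj) hw)

theorem IsAcyclic.induce_anti {V : Type*} {G : SimpleGraph V} {s t : Set V} (hst : s ⊆ t)
    (ht : (G.induce t).IsAcyclic) : (G.induce s).IsAcyclic :=
  ht.embedding (induceHomOfLE G hst)

variable {V : Type*} (G : SimpleGraph V)

theorem isIndep_insert {v : V} {t : Finset V} :
    G.IsIndep (insert v t) ↔ G.IsIndep t ∧ ∀ w ∈ t, ¬ G.Adj v w := by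
  simp only [IsIndep, forall_mem_insert, G.irrefl, not_false_eq_true, true_and]
  grind [G.adj_comm]

noncomputable def indepAltSum (A : Finset V) : ℤ :=
  ∑ s ∈ A.powerset with G.IsIndep s, (-1) ^ s.card

theorem indepAltSum_empty : G.indepAltSum ∅ = 1 := by
  rw [indepAltSum, powerset_empty, filter_singleton, if_pos (by simp [IsIndep]), sum_singleton,
    card_empty, pow_zero]

theorem indepAltSum_insert {v : V} {B : Finset V} (hv : v ∉ B) :
    G.indepAltSum (insert v B) = G.indepAltSum B - G.indepAltSum {w ∈ B | ¬ G.Adj v w} := by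
  have hlink : {s ∈ B.powerset | G.IsIndep (insert v s)} =
      {s ∈ {w ∈ B | ¬ G.Adj v w}.powerset | G.IsIndep s} := by
    ext s
    simp only [mem_filter, mem_powerset, isIndep_insert, subset_iff]
    grind
  rw [indepAltSum, sum_filter, sum_powerset_insert hv, ← sum_filter, ← sum_filter, hlink,
    indepAltSum, indepAltSum, sub_eq_add_neg, ← sum_neg_distrib]
  congr 1
  refine sum_congr rfl fun s hs => ?_
  have hvs : v ∉ s := fun h => hv (mem_filter.1 (mem_powerset.1 (mem_filter.1 hs).1 h)).1
  rw [card_insert_of_notMem hvs, pow_succ, mul_neg_one]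

theorem indepAltSum_eq_zero_of_forall_not_adj {v : V} {A : Finset V} (hv : v ∈ A)
    (hiso : ∀ w ∈ A, ¬ G.Adj v w) : G.indepAltSum A = 0 := by
  rw [← insert_erase hv, indepAltSum_insert G (notMem_erase v A),
    filter_true_of_mem fun w hw => hiso w (mem_of_mem_erase hw), sub_self]

theorem natAbs_indepAltSum_le_one_of_isAcyclic (A : Finset V)
    (hA : (G.induce (A : Set V)).IsAcyclic) : (G.indepAltSum A).natAbs ≤ 1 := by
  induction A using Finset.strongInduction with
  | H A ih =>
  rcases A.eq_empty_or_nonempty with rfl | hne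
  · simp [indepAltSum_empty]
  have : Nonempty (A : Set V) := hne.to_subtype
  obtain ⟨⟨u, hu⟩, hleaf⟩ := hA.exists_subsingleton_neighborSet
  by_cases hiso : ∀ w ∈ A, ¬ G.Adj u w
  · simp [indepAltSum_eq_zero_of_forall_not_adj G hu hiso]
  push Not at hiso
  obtain ⟨w, hw, huw⟩ := hiso
  have hw_unique : ∀ x ∈ A, G.Adj u x → x = w := fun x hx hux =>
    congrArg Subtype.val (@hleaf ⟨x, hx⟩ hux ⟨w, hw⟩ huw)
  have hzero : G.indepAltSum (A.erase w) = 0 :=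
    indepAltSum_eq_zero_of_forall_not_adj G (mem_erase.2 ⟨G.ne_of_adj huw, hu⟩)
      fun x hx hux => ne_of_mem_erase hx (hw_unique x (mem_of_mem_erase hx) hux)
  have hsub : {x ∈ A.erase w | ¬ G.Adj w x} ⊂ A :=
    (filter_subset _ _).trans_ssubset (erase_ssubset hw)
  rw [← insert_erase hw, indepAltSum_insert G (notMem_erase w A), hzero, zero_sub,
    Int.natAbs_neg]
  exact ih _ hsub (hA.induce_anti (coe_subset.2 hsub.subset))

theorem natAbs_indepAltSum_le_two_pow (D : Finset V) :
    ∀ A : Finset V, (G.induce (↑(A \ D) : Set V)).IsAcyclic →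
      (G.indepAltSum A).natAbs ≤ 2 ^ D.card := by
  induction D using Finset.induction_on with
  | empty =>
    intro A hA
    simpa using natAbs_indepAltSum_le_one_of_isAcyclic G A (by rwa [sdiff_empty] at hA)
  | insert v D hv ih =>
    intro A hA
    by_cases hvA : v ∈ A
    · have hA' : (G.induce (↑(A.erase v \ D) : Set V)).IsAcyclic := by
        rwa [erase_sdiff_comm, ← sdiff_insert]
      have hlink : (G.induce (↑({w ∈ A.erase v | ¬ G.Adj v w} \ D) : Set V)).IsAcyclic :=
        hA'.induce_anti (coe_subset.2 (sdiff_subset_sdiff (filter_subset _ _) subset_rfl))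
      rw [← insert_erase hvA, indepAltSum_insert G (notMem_erase v A),
        card_insert_of_notMem hv, pow_succ, mul_two]
      exact (Int.natAbs_sub_le _ _).trans (add_le_add (ih _ hA') (ih _ hlink))
    · rw [sdiff_insert_of_notMem hvA] at hA
      exact (ih A hA).trans (Nat.pow_le_pow_right two_pos (card_le_card (subset_insert v D)))

end SimpleGraph

/-- `|χ̃(Ind(G))| ≤ 2^{φ(G)}` where `φ(G)` is the decycling number of `G`: the minimum
size of a vertex set whose deletion leaves a forest.  Here
`χ̃(Ind(G)) = -∑_{σ indep} (-1)^{|σ|}`, so its absolute value is that of the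
alternating sum. -/
theorem abs_euler_char_le_two_pow_decycling {V : Type*} [Fintype V] (G : SimpleGraph V) :
    (∑ s ∈ Finset.univ.filter G.IsIndep, (-1 : ℤ) ^ s.card).natAbs
      ≤ 2 ^ sInf {k : ℕ | ∃ D : Finset V, D.card = k ∧
          (G.induce ((↑D : Set V)ᶜ)).IsAcyclic} := by
  have hne : {k : ℕ | ∃ D : Finset V, D.card = k ∧ (G.induce ((↑D : Set V)ᶜ)).IsAcyclic}.Nonempty :=
    ⟨_, univ, rfl, fun v => by simpa using v.2⟩
  obtain ⟨D, hD, hDac⟩ := Nat.sInf_mem hne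
  rw [← hD, ← powerset_univ]
  exact G.natAbs_indepAltSum_le_two_pow D univ (by rwa [← compl_eq_univ_sdiff, coe_compl])
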